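/- arXiv:1710.04959 — 4 statements merged into one kernel-verified Lean document; each statement's English description precedes it below -/
import Mathlib

section
/- Let γ be an R-regular arclength-parametrized C^1 simple curve tangentially attached to ℝ₊ with modulus of continuity ω of γ' satisfying ω(R) ≤ 1/5, η = √γ with capacity parametrization. Then for all t with corresponding arclength s ∈ [0,R], the tangent angle satisfies |arg(η'(t)) − π/2| ≤ 2ω(s), where arg(γ'(s)) is measured so that arg(γ'(0)) = π. -/
open Set Filter Complex

/-- The branch of the square root mapping `ℂ ∖ ℝ₊` into the upper half-plane. -/
noncomputable def sqrtH (z : ℂ) : ℂ := Complex.I * ((-z) ^ ((1:ℂ)/2))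

/-!
Write `A = -γ'(s)` and `B = -γ(s)`. Since `γ'(0) = -1`, the modulus of continuity gives
`|A - 1| ≤ ω(s)`, and the mean value inequality then gives `|B - s| ≤ s ω(s)`; so both `A` and `B`
lie in a cone of half-angle `ω/(1 - ω) ≤ 5ω/4` around `ℝ₊`. Differentiating `η = i √B` gives
`η' = (i/2) A / √B`, hence `arg η' - π/2 = arg A - (arg B)/2`, of modulus at most
`(3/2)(5/4) ω(s) ≤ 2 ω(s)`.
-/
open scoped Real

theorem Convex.norm_image_sub_le_of_norm_hasDerivWithin_le' {E : Type*} [NormedAddCommGroup E]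
    [NormedSpace ℝ E] {f f' : ℝ → E} {s : Set ℝ} {x y C : ℝ} {c : E}
    (hf : ∀ x ∈ s, HasDerivWithinAt f (f' x) s x) (bound : ∀ x ∈ s, ‖f' x - c‖ ≤ C)
    (hs : Convex ℝ s) (xs : x ∈ s) (ys : y ∈ s) :
    ‖f y - f x - (y - x) • c‖ ≤ C * ‖y - x‖ := by
  have hg : ∀ x ∈ s, HasDerivWithinAt (fun t => f t - t • c) (f' x - c) s x := fun x hx => by
    have h := (hf x hx).sub ((hasDerivWithinAt_id x s).smul_const c)
    rwa [one_smul] at h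
  calc ‖f y - f x - (y - x) • c‖ = ‖(f y - y • c) - (f x - x • c)‖ := by
        rw [sub_smul]; congr 1; abel
    _ ≤ C * ‖y - x‖ := hs.norm_image_sub_le_of_norm_hasDerivWithin_le hg bound xs ys

theorem Real.abs_le_abs_tan {x : ℝ} (hx : |x| < π / 2) : |x| ≤ |Real.tan x| := by
  rcases le_or_gt 0 x with h | h
  · rw [abs_of_nonneg h] at hx ⊢
    exact (Real.le_tan h hx).trans (le_abs_self _)
  · rw [abs_of_neg h] at hx ⊢
    rw [← abs_neg, ← Real.tan_neg]
    exact (Real.le_tan (by linarith) hx).trans (le_abs_self _)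

namespace Complex

theorem abs_arg_le_abs_im_div_re {z : ℂ} (hz : 0 < z.re) : |arg z| ≤ |z.im| / z.re := by
  calc |arg z| ≤ |Real.tan (arg z)| :=
        Real.abs_le_abs_tan (abs_arg_lt_pi_div_two_iff.2 (Or.inl hz))
    _ = |z.im| / z.re := by rw [tan_arg, abs_div, abs_of_pos hz]

theorem re_pos_of_norm_sub_ofReal_le {z : ℂ} {r δ : ℝ} (hr : 0 < r) (hδ : δ < 1)
    (h : ‖z - r‖ ≤ δ * r) : 0 < z.re := by
  have := (abs_re_le_norm (z - r)).trans h
  rw [sub_re, ofReal_re, abs_le] at this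
  nlinarith

theorem abs_arg_le_of_norm_sub_ofReal_le {z : ℂ} {r δ : ℝ} (hr : 0 < r) (hδ : δ < 1)
    (h : ‖z - r‖ ≤ δ * r) : |arg z| ≤ δ / (1 - δ) := by
  have hre := (abs_re_le_norm (z - r)).trans h
  have him := (abs_im_le_norm (z - r)).trans h
  rw [sub_re, ofReal_re, abs_le] at hre
  rw [sub_im, ofReal_im, sub_zero] at him
  have hz := re_pos_of_norm_sub_ofReal_le hr hδ h
  have hδ0 : 0 ≤ δ := nonneg_of_mul_nonneg_left ((norm_nonneg _).trans h) hr
  refine (abs_arg_le_abs_im_div_re hz).trans ?_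
  rw [div_le_div_iff₀ hz (by linarith)]
  nlinarith [mul_nonneg hδ0 (by linarith : 0 ≤ z.re - r * (1 - δ)),
    mul_nonneg (by linarith : 0 ≤ 1 - δ) (by linarith : 0 ≤ δ * r - |z.im|)]

theorem arg_cpow_ofReal (z : ℂ) {r : ℝ} (h0 : 0 ≤ r) (h1 : r ≤ 1) :
    arg (z ^ (r : ℂ)) = r * arg z := by
  rcases eq_or_ne z 0 with rfl | hz
  · rcases eq_or_ne r 0 with rfl | hr
    · simp
    · simp [zero_cpow (ofReal_ne_zero.2 hr)]
  rw [cpow_ofReal, ofReal_cos, ofReal_sin, arg_mul_cos_add_sin_mul_I, mul_comm]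
  · exact Real.rpow_pos_of_pos (norm_pos_iff.2 hz) _
  constructor
  · rcases h0.eq_or_lt with rfl | h0
    · simp [Real.pi_pos]
    · nlinarith [mul_pos (by linarith [neg_pi_lt_arg z] : 0 < arg z + π) h0, Real.pi_pos]
  · nlinarith [arg_le_pi z, neg_pi_lt_arg z, Real.pi_pos]

theorem arg_I_mul_div {x y : ℂ} (hx : x ≠ 0) (hy : y ≠ 0) (h : |arg x| + |arg y| < π / 2) :
    arg (I * x / y) = π / 2 + arg x - arg y := by
  rw [← arg_coe_angle_toReal_eq_arg, arg_div_coe_angle (mul_ne_zero I_ne_zero hx) hy,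
    arg_mul_coe_angle I_ne_zero hx, arg_I, ← Real.Angle.coe_add, ← Real.Angle.coe_sub,
    Real.Angle.toReal_coe_eq_self_iff_mem_Ioc]
  constructor <;> linarith [neg_abs_le (arg x), le_abs_self (arg x), neg_abs_le (arg y),
    le_abs_self (arg y)]

theorem abs_arg_I_mul_div_sqrt_sub_pi_div_two_le {A B : ℂ} {r δ : ℝ} (hr : 0 < r)
    (hδ : δ ≤ 1 / 5) (hA : ‖A - 1‖ ≤ δ) (hB : ‖B - r‖ ≤ δ * r) :
    |arg (I * A / B ^ ((1 / 2 : ℝ) : ℂ)) - π / 2| ≤ 2 * δ := by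
  have hA' : ‖A - (1 : ℝ)‖ ≤ δ * 1 := by simpa using hA
  have hδ0 : 0 ≤ δ := (norm_nonneg _).trans hA
  have hA_re := re_pos_of_norm_sub_ofReal_le one_pos (by linarith) hA'
  have hB_re := re_pos_of_norm_sub_ofReal_le hr (by linarith) hB
  have hA_arg := abs_arg_le_of_norm_sub_ofReal_le one_pos (by linarith) hA'
  have hB_arg := abs_arg_le_of_norm_sub_ofReal_le hr (by linarith) hB
  have hε : δ / (1 - δ) ≤ 5 / 4 * δ := by
    rw [div_le_iff₀ (by linarith)]; nlinarith
  have hB_sqrt : B ^ ((1 / 2 : ℝ) : ℂ) ≠ 0 := by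
    simpa [cpow_eq_zero_iff] using fun h => hB_re.ne' (by simp [h])
  have hB_arg_half : arg (B ^ ((1 / 2 : ℝ) : ℂ)) = 1 / 2 * arg B :=
    arg_cpow_ofReal B (by norm_num) (by norm_num)
  rw [arg_I_mul_div (fun h => hA_re.ne' (by simp [h])) hB_sqrt, hB_arg_half, abs_le]
  · constructor <;> linarith [abs_le.1 hA_arg, abs_le.1 hB_arg]
  · rw [hB_arg_half, abs_mul, abs_of_pos (by norm_num : (0 : ℝ) < 1 / 2)]
    linarith [Real.pi_gt_three]

end Complex

theorem HasDerivWithinAt.sqrtH {f : ℝ → ℂ} {f' : ℂ} {s : Set ℝ} {x : ℝ}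
    (hf : HasDerivWithinAt f f' s x) (hx : -f x ∈ slitPlane) :
    HasDerivWithinAt (fun t => _root_.sqrtH (f t))
      (((1 / 2 : ℝ) : ℂ) * (I * -f' / (-f x) ^ ((1 / 2 : ℝ) : ℂ))) s x := by
  have h : HasDerivWithinAt (fun t => I * (-f t) ^ ((1 / 2 : ℝ) : ℂ))
      (I * (((1 / 2 : ℝ) : ℂ) * (-f x) ^ (((1 / 2 : ℝ) : ℂ) - 1) * -f')) s x :=
    ((hasStrictDerivAt_cpow_const hx).hasDerivAt.comp_hasDerivWithinAt (h := fun t => -f t) x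
      hf.neg).const_mul I
  rw [show ((1 / 2 : ℝ) : ℂ) - 1 = -((1 / 2 : ℝ) : ℂ) by push_cast; ring, cpow_neg] at h
  convert h using 1
  · funext t
    simp [_root_.sqrtH]
  · ring

/-- The argument of the tangent does not depend on the parametrization, so it is computed in the
arclength parameter. -/
theorem tangent_angle_bound_general (S R : ℝ) (hS : 0 < S) (hRS : R ≤ S)
    (γ γ' : ℝ → ℂ) (ω : ℝ → ℝ)
    (hωmono : ∀ a b : ℝ, 0 ≤ a → a ≤ b → ω a ≤ ω b)
    (hderiv : ∀ s ∈ Set.Icc (0:ℝ) S, HasDerivWithinAt γ (γ' s) (Set.Icc 0 S) s)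
    (hmod : ∀ s ∈ Set.Icc (0:ℝ) S, ∀ s' ∈ Set.Icc (0:ℝ) S,
      ‖γ' s - γ' s'‖ ≤ ω |s - s'|)
    (hγ0 : γ 0 = 0) (hγ'0 : γ' 0 = -1)
    (hωR : ω R ≤ 1/5) :
    ∀ s ∈ Set.Ioc (0:ℝ) R,
      |Complex.arg (derivWithin (fun u => sqrtH (γ u)) (Set.Icc 0 S) s)
        - Real.pi / 2| ≤ 2 * ω s := by
  rintro s ⟨hs0, hsR⟩
  have hsS : s ∈ Icc 0 S := ⟨hs0.le, hsR.trans hRS⟩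
  have hω : ω s ≤ 1 / 5 := (hωmono s R hs0.le hsR).trans hωR
  have hγ'_near : ∀ u ∈ Icc 0 s, ‖γ' u - (-1)‖ ≤ ω s := fun u hu => by
    have h := hmod u ⟨hu.1, hu.2.trans hsS.2⟩ 0 ⟨le_rfl, hS.le⟩
    rw [hγ'0, sub_zero, abs_of_nonneg hu.1] at h
    exact h.trans (hωmono u s hu.1 hu.2)
  have hB : ‖-γ s - s‖ ≤ ω s * s := by
    have h := (convex_Icc 0 s).norm_image_sub_le_of_norm_hasDerivWithin_le'
      (fun u hu => (hderiv u ⟨hu.1, hu.2.trans hsS.2⟩).mono (Icc_subset_Icc le_rfl hsS.2))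
      hγ'_near ⟨le_rfl, hs0.le⟩ ⟨hs0.le, le_rfl⟩
    rw [hγ0, sub_zero, sub_zero, Real.norm_of_nonneg hs0.le] at h
    have e : -γ s - (s : ℂ) = -(γ s - s • (-1 : ℂ)) := by rw [real_smul]; ring
    rwa [e, norm_neg]
  have hA : ‖-γ' s - 1‖ ≤ ω s := by
    rw [← norm_neg, neg_sub', neg_neg]
    exact hγ'_near s ⟨hs0.le, le_rfl⟩
  have hB_re := re_pos_of_norm_sub_ofReal_le hs0 (by linarith) hB
  rw [((hderiv s hsS).sqrtH (mem_slitPlane_iff.2 (.inl hB_re))).derivWithin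
    (uniqueDiffOn_Icc hS s hsS), arg_real_mul _ (by norm_num)]
  exact abs_arg_I_mul_div_sqrt_sub_pi_div_two_le hs0 hω hA hB

/-- For an `R`-regular arclength-parametrized `C^1` simple curve `γ`
tangentially attached to `ℝ₊` with `ω(R) ≤ 1/5`, the tangent direction of
`η = √γ` satisfies `|arg(η') − π/2| ≤ 2ω(s)` for arclength `s ∈ (0,R]`.
(The argument of the tangent is independent of the parametrization, so it is
computed using the arclength parameter.) -/
theorem tangent_angle_bound (S R : ℝ) (hS : 0 < S) (hR : 0 < R) (hRS : R ≤ S)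
    (γ γ' : ℝ → ℂ) (ω : ℝ → ℝ)
    (hωmono : ∀ a b : ℝ, 0 ≤ a → a ≤ b → ω a ≤ ω b)
    (hderiv : ∀ s ∈ Set.Icc (0:ℝ) S, HasDerivWithinAt γ (γ' s) (Set.Icc 0 S) s)
    (hunit : ∀ s ∈ Set.Icc (0:ℝ) S, ‖γ' s‖ = 1)
    (hmod : ∀ s ∈ Set.Icc (0:ℝ) S, ∀ s' ∈ Set.Icc (0:ℝ) S,
      ‖γ' s - γ' s'‖ ≤ ω |s - s'|)
    (hγ0 : γ 0 = 0) (hγ'0 : γ' 0 = -1)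
    (hinj : Set.InjOn γ (Set.Icc 0 S))
    (havoid : ∀ s ∈ Set.Ioc (0:ℝ) S, ¬ (0 ≤ (γ s).re ∧ (γ s).im = 0))
    (hreg : ∀ s ∈ Set.Icc (0:ℝ) S, ∀ r : ℝ, 0 < r → r ≤ R →
      IsConnected (Metric.closedBall (γ s) r ∩
        ((fun u : ℝ => if 0 ≤ u then γ u else ((-u : ℝ) : ℂ)) '' Set.Iic S)))
    (hωR : ω R ≤ 1/5) :
    ∀ s ∈ Set.Ioc (0:ℝ) R,
      |Complex.arg (derivWithin (fun u => sqrtH (γ u)) (Set.Icc 0 S) s)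
        - Real.pi / 2| ≤ 2 * ω s :=
  tangent_angle_bound_general S R hS hRS γ γ' ω hωmono hderiv hmod hγ0 hγ'0 hωR
end

section
/- Let w : ℝ → ℝ be measurable with |w(r)| ≤ C·(|r|^{2β} ∧ 1) for some 0 < β < 1/2, and let v(x+iy) = (1/π)∫ y/((r−x)²+y²)·w(r) dr be its Poisson extension to the upper half-plane. Then there exists C₁ = C₁(C,β) such that |v(x+iy)| ≤ C₁·y^{2β} for all 0 ≤ |x| ≤ y ≤ 1/2. -/
open MeasureTheory Real

/-! Since `|x| ≤ y` and `t ↦ t ^ (2β)` is subadditive, `|w r| ≤ C (|r - x| ^ (2β) + y ^ (2β))`.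
The Poisson kernel at `x + iy` has total mass one, so the second term contributes `C y ^ (2β)`;
the substitution `r = x + y t` turns the first into `C y ^ (2β) ∫ |t| ^ (2β) / (1 + t²) dt / π`,
which is finite because `2β < 1`. -/

theorem abs_rpow_le_abs_sub_rpow_add_rpow {p x y : ℝ} (r : ℝ) (hp0 : 0 ≤ p) (hp1 : p ≤ 1)
    (hxy : |x| ≤ y) : |r| ^ p ≤ |r - x| ^ p + y ^ p :=
  calc |r| ^ p ≤ (|r - x| + |x|) ^ p :=
        rpow_le_rpow (abs_nonneg r) (by simpa using abs_add_le (r - x) x) hp0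
    _ ≤ |r - x| ^ p + |x| ^ p := rpow_add_le_add_rpow (abs_nonneg _) (abs_nonneg _) hp0 hp1
    _ ≤ |r - x| ^ p + y ^ p := by gcongr

theorem abs_rpow_div_one_add_sq_le {p : ℝ} (hp0 : 0 ≤ p) (t : ℝ) :
    |t| ^ p / (1 + t ^ 2) ≤ (1 + ‖t‖ ^ 2) ^ (-(2 - p) / 2) := by
  have hpos : 0 < 1 + t ^ 2 := by positivity
  have hnum : |t| ^ p ≤ (1 + t ^ 2) ^ (p / 2) := by
    calc |t| ^ p = (t ^ 2) ^ (p / 2) := by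
          rw [← sq_abs, ← rpow_natCast, ← rpow_mul (abs_nonneg t)]; ring_nf
      _ ≤ (1 + t ^ 2) ^ (p / 2) := by gcongr; linarith
  calc |t| ^ p / (1 + t ^ 2) ≤ (1 + t ^ 2) ^ (p / 2) / (1 + t ^ 2) := by gcongr
    _ = (1 + ‖t‖ ^ 2) ^ (-(2 - p) / 2) := by
      rw [norm_eq_abs, sq_abs, ← rpow_sub_one hpos.ne']; ring_nf

theorem integrable_abs_rpow_div_one_add_sq {p : ℝ} (hp0 : 0 ≤ p) (hp1 : p < 1) :
    Integrable fun t : ℝ => |t| ^ p / (1 + t ^ 2) := by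
  have hmeas : Measurable fun t : ℝ => |t| ^ p / (1 + t ^ 2) := by fun_prop
  refine (integrable_rpow_neg_one_add_norm_sq (E := ℝ) (r := 2 - p) (by simp; linarith)).mono'
    hmeas.aestronglyMeasurable (ae_of_all _ fun t => ?_)
  rw [norm_of_nonneg (by positivity)]
  exact abs_rpow_div_one_add_sq_le hp0 t

theorem div_sq_add_sq_mul_abs_rpow {y : ℝ} (hy : 0 < y) (p s : ℝ) :
    y / (s ^ 2 + y ^ 2) * |s| ^ p = y ^ (p - 1) * (|s / y| ^ p / (1 + (s / y) ^ 2)) := by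
  rw [abs_div, abs_of_pos hy, div_rpow (abs_nonneg s) hy.le, rpow_sub_one hy.ne']
  have : y ^ p ≠ 0 := (rpow_pos_of_pos hy p).ne'
  field_simp
  ring

theorem integrable_div_sub_sq_add_sq_mul_abs_sub_rpow (x : ℝ) {p y : ℝ} (hy : 0 < y)
    (hp0 : 0 ≤ p) (hp1 : p < 1) :
    Integrable fun r => y / ((r - x) ^ 2 + y ^ 2) * |r - x| ^ p := by
  simp_rw [div_sq_add_sq_mul_abs_rpow hy]
  have h := (integrable_abs_rpow_div_one_add_sq hp0 hp1).comp_div hy.ne'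
  exact (h.const_mul _).comp_sub_right x

theorem integral_div_sub_sq_add_sq_mul_abs_sub_rpow (x p : ℝ) {y : ℝ} (hy : 0 < y) :
    ∫ r, y / ((r - x) ^ 2 + y ^ 2) * |r - x| ^ p = y ^ p * ∫ t, |t| ^ p / (1 + t ^ 2) := by
  rw [integral_sub_right_eq_self (fun s => y / (s ^ 2 + y ^ 2) * |s| ^ p) x]
  simp_rw [div_sq_add_sq_mul_abs_rpow hy]
  rw [integral_const_mul, Measure.integral_comp_div (fun t => |t| ^ p / (1 + t ^ 2)),
    abs_of_pos hy, smul_eq_mul, ← mul_assoc, ← rpow_add_one hy.ne', sub_add_cancel]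

theorem integrable_div_sub_sq_add_sq (x : ℝ) {y : ℝ} (hy : 0 < y) :
    Integrable fun r => y / ((r - x) ^ 2 + y ^ 2) := by
  simpa using integrable_div_sub_sq_add_sq_mul_abs_sub_rpow x hy le_rfl zero_lt_one

theorem integral_div_sub_sq_add_sq (x : ℝ) {y : ℝ} (hy : 0 < y) :
    ∫ r, y / ((r - x) ^ 2 + y ^ 2) = π := by
  simpa [← inv_eq_one_div, integral_univ_inv_one_add_sq] using
    integral_div_sub_sq_add_sq_mul_abs_sub_rpow x 0 hy

theorem abs_integral_div_sub_sq_add_sq_mul_le {C p x y : ℝ} {w : ℝ → ℝ} (hC : 0 ≤ C)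
    (hp0 : 0 ≤ p) (hp1 : p < 1) (hy : 0 < y) (hxy : |x| ≤ y) (hw : ∀ r, |w r| ≤ C * |r| ^ p) :
    |∫ r, y / ((r - x) ^ 2 + y ^ 2) * w r| ≤
      C * ((∫ t, |t| ^ p / (1 + t ^ 2)) + π) * y ^ p := by
  set K : ℝ → ℝ := fun r => y / ((r - x) ^ 2 + y ^ 2)
  have hK : ∀ r, 0 ≤ K r := fun r => by positivity
  have hpointwise : ∀ r, |K r * w r| ≤ C * (K r * |r - x| ^ p) + C * y ^ p * K r := fun r =>
    calc |K r * w r| = K r * |w r| := by rw [abs_mul, abs_of_nonneg (hK r)]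
      _ ≤ K r * (C * (|r - x| ^ p + y ^ p)) := by
        gcongr
        exact (hw r).trans (by gcongr; exact abs_rpow_le_abs_sub_rpow_add_rpow r hp0 hp1.le hxy)
      _ = C * (K r * |r - x| ^ p) + C * y ^ p * K r := by ring
  have hint₁ := (integrable_div_sub_sq_add_sq_mul_abs_sub_rpow x hy hp0 hp1).const_mul C
  have hint₂ := (integrable_div_sub_sq_add_sq x hy).const_mul (C * y ^ p)
  calc |∫ r, K r * w r| ≤ ∫ r, |K r * w r| := abs_integral_le_integral_abs
    _ ≤ ∫ r, (C * (K r * |r - x| ^ p) + C * y ^ p * K r) :=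
      integral_mono_of_nonneg (ae_of_all _ fun r => abs_nonneg _) (hint₁.add hint₂)
        (ae_of_all _ hpointwise)
    _ = C * ((∫ t, |t| ^ p / (1 + t ^ 2)) + π) * y ^ p := by
      rw [integral_add hint₁ hint₂, integral_const_mul, integral_const_mul,
        integral_div_sub_sq_add_sq_mul_abs_sub_rpow x p hy, integral_div_sub_sq_add_sq x hy]
      ring

theorem poisson_extension_bound_general (C β : ℝ) (hC : 0 < C) (hβ0 : 0 < β)
    (hβ : β < 1/2) (w : ℝ → ℝ)
    (hbound : ∀ r : ℝ, |w r| ≤ C * min (|r| ^ (2 * β)) 1) :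
    ∃ C₁ : ℝ, 0 < C₁ ∧ ∀ x y : ℝ, |x| ≤ y → y ≤ 1/2 → 0 < y →
      |(1 / π) * ∫ r : ℝ, y / ((r - x) ^ 2 + y ^ 2) * w r| ≤ C₁ * y ^ (2 * β) := by
  set I := ∫ t : ℝ, |t| ^ (2 * β) / (1 + t ^ 2)
  have hI : 0 ≤ I := integral_nonneg fun t => by positivity
  have hw : ∀ r, |w r| ≤ C * |r| ^ (2 * β) := fun r =>
    (hbound r).trans (mul_le_mul_of_nonneg_left (min_le_left _ _) hC.le)
  refine ⟨C * (I + π) / π, by positivity, fun x y hxy _ hy => ?_⟩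
  calc |(1 / π) * ∫ r, y / ((r - x) ^ 2 + y ^ 2) * w r|
      = (1 / π) * |∫ r, y / ((r - x) ^ 2 + y ^ 2) * w r| := by
        rw [abs_mul, abs_of_pos (one_div_pos.2 pi_pos)]
    _ ≤ (1 / π) * (C * (I + π) * y ^ (2 * β)) := by
        gcongr
        exact abs_integral_div_sub_sq_add_sq_mul_le hC.le (by positivity) (by linarith) hy hxy hw
    _ = C * (I + π) / π * y ^ (2 * β) := by ring

/-- If `|w(r)| ≤ C·(|r|^{2β} ∧ 1)` with `0 < β < 1/2`, then the
Poisson extension `v` of `w` to the upper half-plane satisfies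
`|v(x+iy)| ≤ C₁·y^{2β}` on the cone `0 ≤ |x| ≤ y ≤ 1/2`. -/
theorem poisson_extension_bound (C β : ℝ) (hC : 0 < C) (hβ0 : 0 < β)
    (hβ : β < 1/2) (w : ℝ → ℝ) (hw : Measurable w)
    (hbound : ∀ r : ℝ, |w r| ≤ C * min (|r| ^ (2 * β)) 1) :
    ∃ C₁ : ℝ, 0 < C₁ ∧ ∀ x y : ℝ, |x| ≤ y → y ≤ 1/2 → 0 < y →
      |(1 / π) * ∫ r : ℝ, y / ((r - x) ^ 2 + y ^ 2) * w r| ≤ C₁ * y ^ (2 * β) :=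
  poisson_extension_bound_general C β hC hβ0 hβ w hbound
end

section
/- Let w : ℝ → ℝ be measurable with |w(r)| ≤ C·(|r|^{2β} ∧ 1) for some 1/2 < β < 1, let u be a harmonic conjugate in ℍ of the Poisson extension of w, and define L = (1/π)∫_{−∞}^{∞} w(r)/r² dr (the integral converges absolutely). Then there exists C₁ = C₁(C,β) such that |∂_x u(x+iy) − L| ≤ C₁·y^{2β−1} for all 0 ≤ |x| ≤ y ≤ 1/2. -/
open Set Filter MeasureTheory Real

/-!
With `z = x + iy`, the kernel `((r - x)² - y²) / ((r - x)² + y²)²` is `Re (r - z)⁻²`, and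
`(r - z)⁻² - r⁻² = z (2r - z) / ((r - z)² r²)`. On the cone `|x| ≤ y` we have `|r - z|² ≥ r² / 2`
and `|z| ≤ 2y`, so the kernel differs from `r⁻²` by `O(min(|r|, y) / |r|³)`. Against
`|w(r)| ≤ C |r|^{2β}` this leaves the integrable majorant `C |r|^{2β-3} min(|r|, y)`, whose integral
is exactly `2 (1/(2β-1) + 1/(2-2β)) y^{2β-1}`. The same majorant with `y = 1` bounds `w(r) / r²`,
because `2β ≥ 1`; this is what makes `L` absolutely convergent.
-/

lemma norm_inv_sq_sub_inv_sq {𝕜 : Type*} [NormedField 𝕜] {a b : 𝕜} (ha : a ≠ 0) (hb : b ≠ 0) :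
    ‖(a ^ 2)⁻¹ - (b ^ 2)⁻¹‖ = ‖b - a‖ * ‖b + a‖ / (‖a‖ ^ 2 * ‖b‖ ^ 2) := by
  rw [show (a ^ 2)⁻¹ - (b ^ 2)⁻¹ = (b - a) * (b + a) / (a ^ 2 * b ^ 2) by field_simp; ring]
  simp only [norm_div, norm_mul, norm_pow]

lemma re_inv_sq_ofReal_sub (x y r : ℝ) :
    (((r : ℂ) - (x + y * Complex.I)) ^ 2)⁻¹.re
      = ((r - x) ^ 2 - y ^ 2) / ((r - x) ^ 2 + y ^ 2) ^ 2 := by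
  rw [Complex.inv_re, map_pow, Complex.normSq_apply]
  simp [sq]

section PoissonKernelDerivative

variable {x y r : ℝ}

lemma sq_le_two_mul_norm_ofReal_sub_sq (hxy : |x| ≤ y) :
    r ^ 2 ≤ 2 * ‖(r : ℂ) - (x + y * Complex.I)‖ ^ 2 := by
  rw [Complex.sq_norm, Complex.normSq_apply]
  simp only [Complex.sub_re, Complex.sub_im, Complex.add_re, Complex.add_im, Complex.ofReal_re,
    Complex.ofReal_im, Complex.mul_re, Complex.mul_im, Complex.I_re, Complex.I_im]
  nlinarith [sq_abs x, abs_nonneg x, sq_nonneg (r - 2 * x)]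

lemma norm_add_mul_I_le (hxy : |x| ≤ y) : ‖(x : ℂ) + y * Complex.I‖ ≤ 2 * y := by
  have := Complex.norm_le_abs_re_add_abs_im (x + y * Complex.I)
  simp at this
  linarith [abs_of_nonneg ((abs_nonneg x).trans hxy)]

lemma abs_kernel_le (hxy : |x| ≤ y) (hr : r ≠ 0) :
    |((r - x) ^ 2 - y ^ 2) / ((r - x) ^ 2 + y ^ 2) ^ 2| ≤ 2 / r ^ 2 := by
  have hd := sq_le_two_mul_norm_ofReal_sub_sq (r := r) hxy
  have hr2 : 0 < r ^ 2 := by positivity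
  rw [← re_inv_sq_ofReal_sub]
  refine (Complex.abs_re_le_norm _).trans ?_
  rw [norm_inv, norm_pow, inv_eq_one_div, div_le_div_iff₀ (by linarith) hr2]
  linarith

lemma abs_kernel_sub_inv_sq_le_near (hxy : |x| ≤ y) (hr : r ≠ 0) :
    |((r - x) ^ 2 - y ^ 2) / ((r - x) ^ 2 + y ^ 2) ^ 2 - 1 / r ^ 2| ≤ 3 / r ^ 2 := by
  calc _ ≤ |((r - x) ^ 2 - y ^ 2) / ((r - x) ^ 2 + y ^ 2) ^ 2| + |1 / r ^ 2| := abs_sub _ _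
    _ ≤ 2 / r ^ 2 + 1 / r ^ 2 := by
      rw [abs_of_nonneg (by positivity : (0 : ℝ) ≤ 1 / r ^ 2)]
      gcongr
      exact abs_kernel_le hxy hr
    _ = 3 / r ^ 2 := by ring

lemma abs_kernel_sub_inv_sq_le_far (hxy : |x| ≤ y) (hr : r ≠ 0) :
    |((r - x) ^ 2 - y ^ 2) / ((r - x) ^ 2 + y ^ 2) ^ 2 - 1 / r ^ 2|
      ≤ 8 * y * (|r| + y) / r ^ 4 := by
  set z : ℂ := x + y * Complex.I
  have hd := sq_le_two_mul_norm_ofReal_sub_sq (r := r) hxy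
  have hz := norm_add_mul_I_le hxy
  have hy : 0 ≤ y := (abs_nonneg x).trans hxy
  have hr2 : 0 < r ^ 2 := by positivity
  have hrz : (r : ℂ) - z ≠ 0 := by
    rw [← norm_pos_iff]
    nlinarith [norm_nonneg ((r : ℂ) - z)]
  have hre : ((r - x) ^ 2 - y ^ 2) / ((r - x) ^ 2 + y ^ 2) ^ 2 - 1 / r ^ 2
      = ((((r : ℂ) - z) ^ 2)⁻¹ - ((r : ℂ) ^ 2)⁻¹).re := by
    rw [Complex.sub_re, re_inv_sq_ofReal_sub, ← Complex.ofReal_pow, ← Complex.ofReal_inv,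
      Complex.ofReal_re, one_div]
  have h2rz : ‖(r : ℂ) + ((r : ℂ) - z)‖ ≤ 2 * |r| + 2 * y := by
    calc _ = ‖2 * (r : ℂ) - z‖ := by ring_nf
      _ ≤ 2 * |r| + 2 * y := by
        refine (norm_sub_le _ _).trans ?_
        simp only [norm_mul, Complex.norm_ofNat, Complex.norm_real, Real.norm_eq_abs]
        linarith
  rw [hre]
  refine (Complex.abs_re_le_norm _).trans ?_
  rw [norm_inv_sq_sub_inv_sq hrz (by exact_mod_cast hr), sub_sub_cancel, Complex.norm_real,
    Real.norm_eq_abs, sq_abs, div_le_div_iff₀ (by positivity) (by positivity)]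
  calc ‖z‖ * ‖(r : ℂ) + ((r : ℂ) - z)‖ * r ^ 4
      ≤ 2 * y * (2 * |r| + 2 * y) * r ^ 4 := by gcongr
    _ = 8 * y * (|r| + y) * (r ^ 2 / 2 * r ^ 2) := by ring
    _ ≤ 8 * y * (|r| + y) * (‖(r : ℂ) - z‖ ^ 2 * r ^ 2) := by
      gcongr
      linarith

lemma abs_kernel_sub_inv_sq_le (hxy : |x| ≤ y) (hr : r ≠ 0) :
    |((r - x) ^ 2 - y ^ 2) / ((r - x) ^ 2 + y ^ 2) ^ 2 - 1 / r ^ 2|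
      ≤ 16 * min |r| y / |r| ^ 3 := by
  have hr' : 0 < |r| := abs_pos.mpr hr
  have hr3 : |r| ^ 3 = |r| * r ^ 2 := by rw [← sq_abs r]; ring
  rcases le_total |r| y with hle | hle
  · refine (abs_kernel_sub_inv_sq_le_near hxy hr).trans ?_
    rw [min_eq_left hle, hr3, div_le_div_iff₀ (by positivity) (by positivity)]
    nlinarith [sq_nonneg r]
  · refine (abs_kernel_sub_inv_sq_le_far hxy hr).trans ?_
    have hy : 0 ≤ y := (abs_nonneg x).trans hxy
    rw [min_eq_right hle, hr3, div_le_div_iff₀ (by positivity) (by positivity),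
      show r ^ 4 = |r| * |r| * r ^ 2 by rw [abs_mul_abs_self]; ring]
    calc 8 * y * (|r| + y) * (|r| * r ^ 2) ≤ 8 * y * (2 * |r|) * (|r| * r ^ 2) := by
          gcongr; linarith
      _ = 16 * y * (|r| * |r| * r ^ 2) := by ring

end PoissonKernelDerivative

lemma integrable_comp_abs_of_integrableOn_Ioi {E : Type*} [NormedAddCommGroup E] {f : ℝ → E}
    (hf : IntegrableOn f (Ioi 0)) : Integrable (fun x : ℝ => f |x|) := by
  have h_Ioi : IntegrableOn (fun x : ℝ => f |x|) (Ioi 0) :=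
    hf.congr_fun (fun x hx => by rw [abs_of_pos hx]) measurableSet_Ioi
  have h_Iic : IntegrableOn (fun x : ℝ => f |x|) (Iic 0) := by
    have hneg : MeasurableEmbedding fun x : ℝ => -x := (Homeomorph.neg ℝ).measurableEmbedding
    rw [← Measure.map_neg_eq_self (volume : Measure ℝ), hneg.integrableOn_map_iff]
    simp_rw [Function.comp_def, abs_neg, neg_preimage, neg_Iic, neg_zero]
    exact Iff.mpr integrableOn_Ici_iff_integrableOn_Ioi h_Ioi
  rw [← integrableOn_univ, ← Iic_union_Ioi (a := (0 : ℝ))]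
  exact h_Iic.union h_Ioi

section RpowMulMin

variable {q y : ℝ}

lemma integrableOn_Ioc_rpow_mul_min (hq : -2 < q) (hy : 0 < y) :
    IntegrableOn (fun t : ℝ => t ^ q * min t y) (Ioc 0 y) := by
  have h := intervalIntegral.intervalIntegrable_rpow' (a := 0) (b := y) (r := q + 1) (by linarith)
  rw [intervalIntegrable_iff_integrableOn_Ioc_of_le hy.le] at h
  exact h.congr_fun (fun t ht => by dsimp only; rw [min_eq_left ht.2, rpow_add_one ht.1.ne'])
    measurableSet_Ioc

lemma integrableOn_Ioi_rpow_mul_min (hq : q < -1) (hy : 0 < y) :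
    IntegrableOn (fun t : ℝ => t ^ q * min t y) (Ioi y) :=
  IntegrableOn.congr_fun ((integrableOn_Ioi_rpow_of_lt hq hy).mul_const y)
    (fun t ht => by rw [min_eq_right (le_of_lt ht)]) measurableSet_Ioi

lemma integral_Ioi_zero_rpow_mul_min (hq₂ : -2 < q) (hq₁ : q < -1) (hy : 0 < y) :
    ∫ t in Ioi 0, t ^ q * min t y = (1 / (q + 2) - 1 / (q + 1)) * y ^ (q + 2) := by
  have hq2 : q + 2 ≠ 0 := by linarith
  have hq1 : q + 1 ≠ 0 := by linarith
  have h_near : ∫ t in Ioc 0 y, t ^ q * min t y = y ^ (q + 2) / (q + 2) := by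
    rw [setIntegral_congr_fun measurableSet_Ioc
        (fun t ht => by rw [min_eq_left ht.2, ← rpow_add_one ht.1.ne']),
      ← intervalIntegral.integral_of_le hy.le, integral_rpow (Or.inl (by linarith)),
      zero_rpow (by linarith)]
    ring_nf
  have h_far : ∫ t in Ioi y, t ^ q * min t y = -y ^ (q + 2) / (q + 1) := by
    rw [setIntegral_congr_fun measurableSet_Ioi
        (fun t ht => by rw [min_eq_right (le_of_lt ht)]),
      integral_mul_const, integral_Ioi_rpow_of_lt hq₁ hy,
      show q + 2 = q + 1 + 1 by ring, rpow_add_one hy.ne' (q + 1)]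
    ring
  rw [← Ioc_union_Ioi_eq_Ioi hy.le, setIntegral_union (Ioc_disjoint_Ioi le_rfl) measurableSet_Ioi
    (integrableOn_Ioc_rpow_mul_min hq₂ hy) (integrableOn_Ioi_rpow_mul_min hq₁ hy), h_near, h_far]
  ring

lemma integrable_abs_rpow_mul_min (hq₂ : -2 < q) (hq₁ : q < -1) (hy : 0 < y) :
    Integrable (fun t : ℝ => |t| ^ q * min |t| y) := by
  refine integrable_comp_abs_of_integrableOn_Ioi (f := fun t => t ^ q * min t y) ?_
  rw [← Ioc_union_Ioi_eq_Ioi hy.le]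
  exact (integrableOn_Ioc_rpow_mul_min hq₂ hy).union (integrableOn_Ioi_rpow_mul_min hq₁ hy)

lemma integral_abs_rpow_mul_min (hq₂ : -2 < q) (hq₁ : q < -1) (hy : 0 < y) :
    ∫ t : ℝ, |t| ^ q * min |t| y = 2 * (1 / (q + 2) - 1 / (q + 1)) * y ^ (q + 2) := by
  rw [integral_comp_abs (f := fun t => t ^ q * min t y),
    integral_Ioi_zero_rpow_mul_min hq₂ hq₁ hy, mul_assoc]

end RpowMulMin

section Weight

variable {C p x y r a : ℝ}

lemma min_rpow_one_le_rpow_sub_one_mul_min {t : ℝ} (ht : 0 ≤ t) (hp : 1 ≤ p) :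
    min (t ^ p) 1 ≤ t ^ (p - 1) * min t 1 := by
  rcases le_total t 1 with h | h
  · rw [min_eq_left h, ← rpow_add_one' ht (by linarith), sub_add_cancel]
    exact min_le_left _ _
  · rw [min_eq_right h, mul_one]
    exact (min_le_right _ _).trans (one_le_rpow h (by linarith))

lemma abs_div_sq_le_of_abs_le_mul_min (hC : 0 ≤ C) (hp : 1 ≤ p) (hr : r ≠ 0)
    (ha : |a| ≤ C * min (|r| ^ p) 1) :
    |a / r ^ 2| ≤ C * (|r| ^ (p - 3) * min |r| 1) := by
  have hr' : 0 < |r| := abs_pos.mpr hr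
  have hexp : |r| ^ (p - 3) = |r| ^ (p - 1) / |r| ^ 2 := by
    rw [← rpow_sub_natCast hr'.ne']
    norm_num [sub_sub]
  rw [abs_div, abs_pow, hexp, div_mul_eq_mul_div, mul_div_assoc',
    div_le_div_iff_of_pos_right (by positivity)]
  exact ha.trans (mul_le_mul_of_nonneg_left (min_rpow_one_le_rpow_sub_one_mul_min hr'.le hp) hC)

lemma abs_kernel_mul_sub_div_sq_le (hC : 0 ≤ C) (hxy : |x| ≤ y) (hr : r ≠ 0)
    (ha : |a| ≤ C * min (|r| ^ p) 1) :
    |((r - x) ^ 2 - y ^ 2) / ((r - x) ^ 2 + y ^ 2) ^ 2 * a - a / r ^ 2|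
      ≤ 16 * C * (|r| ^ (p - 3) * min |r| y) := by
  have hr' : 0 < |r| := abs_pos.mpr hr
  have ha' : |a| ≤ C * |r| ^ p := ha.trans (mul_le_mul_of_nonneg_left (min_le_left _ _) hC)
  rw [show ((r - x) ^ 2 - y ^ 2) / ((r - x) ^ 2 + y ^ 2) ^ 2 * a - a / r ^ 2
      = (((r - x) ^ 2 - y ^ 2) / ((r - x) ^ 2 + y ^ 2) ^ 2 - 1 / r ^ 2) * a by ring,
    abs_mul, show p - 3 = p - (3 : ℕ) by norm_num, rpow_sub_natCast hr'.ne']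
  calc _ ≤ 16 * min |r| y / |r| ^ 3 * (C * |r| ^ p) :=
        mul_le_mul (abs_kernel_sub_inv_sq_le hxy hr) ha' (abs_nonneg a)
          (by have := (abs_nonneg x).trans hxy; positivity)
    _ = 16 * C * (|r| ^ p / |r| ^ 3 * min |r| y) := by ring

end Weight

/-- If `|w(r)| ≤ C·(|r|^{2β} ∧ 1)` with `1/2 < β < 1`, and
`L = (1/π)∫ w(r)/r² dr`, then the `x`-derivative of the harmonic conjugate of the
Poisson extension of `w`, namely `∂_x u(x+iy) = (1/π)∫ ((r−x)²−y²)/((r−x)²+y²)²·w(r) dr`,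
satisfies `|∂_x u(x+iy) − L| ≤ C₁·y^{2β−1}` on the cone `0 ≤ |x| ≤ y ≤ 1/2`. -/
theorem conjugate_derivative_bound (C β : ℝ) (hC : 0 < C) (hβ0 : 1/2 < β)
    (hβ : β < 1) (w : ℝ → ℝ) (hw : Measurable w)
    (hbound : ∀ r : ℝ, |w r| ≤ C * min (|r| ^ (2 * β)) 1) :
    ∃ C₁ : ℝ, 0 < C₁ ∧ ∀ x y : ℝ, |x| ≤ y → y ≤ 1/2 → 0 < y →
      |(1 / π) * (∫ r : ℝ, ((r - x) ^ 2 - y ^ 2) / (((r - x) ^ 2 + y ^ 2) ^ 2) * w r)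
        - (1 / π) * (∫ r : ℝ, w r / r ^ 2)| ≤ C₁ * y ^ (2 * β - 1) := by
  have hq₂ : -2 < 2 * β - 3 := by linarith
  have hq₁ : 2 * β - 3 < -1 := by linarith
  have hp : 1 ≤ 2 * β := by linarith
  have h_lo : 0 < 2 * β - 1 := by linarith
  have h_hi : 0 < 2 - 2 * β := by linarith
  refine ⟨32 * C * (1 / (2 * β - 1) + 1 / (2 - 2 * β)) / π, by positivity,
    fun x y hxy _ hy => ?_⟩
  have hr0 : ∀ᵐ r : ℝ, r ≠ 0 := by simp [ae_iff, measure_singleton]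
  have h_div : Integrable (fun r => w r / r ^ 2) :=
    ((integrable_abs_rpow_mul_min hq₂ hq₁ one_pos).const_mul C).mono'
      (hw.div (by fun_prop)).aestronglyMeasurable
      (hr0.mono fun r hr => abs_div_sq_le_of_abs_le_mul_min hC.le hp hr (hbound r))
  have h_bound : ∀ᵐ r : ℝ, ‖((r - x) ^ 2 - y ^ 2) / ((r - x) ^ 2 + y ^ 2) ^ 2 * w r - w r / r ^ 2‖
      ≤ 16 * C * (|r| ^ (2 * β - 3) * min |r| y) :=
    hr0.mono fun r hr => abs_kernel_mul_sub_div_sq_le hC.le hxy hr (hbound r)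
  have h_dom := (integrable_abs_rpow_mul_min hq₂ hq₁ hy).const_mul (16 * C)
  have h_ker : Integrable (fun r => ((r - x) ^ 2 - y ^ 2) / ((r - x) ^ 2 + y ^ 2) ^ 2 * w r) :=
    ((h_dom.mono' (by fun_prop) h_bound).add h_div).congr
      (ae_of_all _ fun r => sub_add_cancel _ _)
  calc _ = (1 / π) *
        |∫ r : ℝ, ((r - x) ^ 2 - y ^ 2) / ((r - x) ^ 2 + y ^ 2) ^ 2 * w r - w r / r ^ 2| := by
        rw [← mul_sub, integral_sub h_ker h_div, abs_mul, abs_of_pos (by positivity)]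
    _ ≤ (1 / π) * ∫ r : ℝ, 16 * C * (|r| ^ (2 * β - 3) * min |r| y) := by
        gcongr
        exact norm_integral_le_of_norm_le h_dom h_bound
    _ = _ := by
        rw [integral_const_mul, integral_abs_rpow_mul_min hq₂ hq₁ hy,
          show 2 * β - 3 + 2 = 2 * β - 1 by ring, show 2 * β - 3 + 1 = -(2 - 2 * β) by ring,
          one_div_neg_eq_neg_one_div]
        ring
end

section
/- Let w : ℝ → ℝ be measurable with |w(r)| ≤ C·(|r| ∧ 1) (the case β = 1/2), and v its Poisson extension to ℍ with harmonic conjugate u. Then there exists C₁ = C₁(C) such that |∂_x u(x+iy)| ≤ C₁·log(1/y) for all 0 ≤ x ≤ y ≤ 1/2. -/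
open Set Filter MeasureTheory Real

-- auxiliary: ∫_{a}^{b} s/(s²+y²) ds
lemma aux_ftc (y : ℝ) (hy : 0 < y) (a b : ℝ) :
    ∫ s in a..b, s / (s ^ 2 + y ^ 2) =
      (1/2) * Real.log (b ^ 2 + y ^ 2) - (1/2) * Real.log (a ^ 2 + y ^ 2) := by
  have hcont : Continuous fun s : ℝ => s / (s ^ 2 + y ^ 2) := by
    apply Continuous.div continuous_id' (by continuity)
    intro s; positivity
  have h : ∀ s ∈ uIcc a b,
      HasDerivAt (fun s => (1/2) * Real.log (s ^ 2 + y ^ 2)) (s / (s ^ 2 + y ^ 2)) s := by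
    intro s _
    have h1 : HasDerivAt (fun s : ℝ => s ^ 2 + y ^ 2) (2 * s) s := by
      simpa using (hasDerivAt_pow 2 s).add_const (y ^ 2)
    have hne : s ^ 2 + y ^ 2 ≠ 0 := by positivity
    have h2 := (Real.hasDerivAt_log hne).comp s h1
    have h3 := h2.const_mul (1/2 : ℝ)
    have heq : (1/2:ℝ) * ((s ^ 2 + y ^ 2)⁻¹ * (2 * s)) = s / (s ^ 2 + y ^ 2) := by
      field_simp
    exact heq ▸ h3
  rw [intervalIntegral.integral_eq_sub_of_hasDerivAt h (hcont.intervalIntegrable a b)]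

lemma aux_g1 (x y : ℝ) (hy : 0 < y) :
    ∫ r : ℝ, (Set.Icc (x-1) (x+1)).indicator
        (fun r => |r - x| / ((r - x) ^ 2 + y ^ 2)) r
      = Real.log (1 + y ^ 2) - Real.log (y ^ 2) := by
  have hcont : Continuous fun s : ℝ => |s| / (s ^ 2 + y ^ 2) := by
    apply Continuous.div continuous_abs (by continuity)
    intro s; positivity
  rw [MeasureTheory.integral_indicator measurableSet_Icc,
    MeasureTheory.integral_Icc_eq_integral_Ioc,
    ← intervalIntegral.integral_of_le (by linarith : x - 1 ≤ x + 1)]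
  have hshift := intervalIntegral.integral_comp_sub_right
    (a := x - 1) (b := x + 1) (fun s => |s| / (s ^ 2 + y ^ 2)) x
  rw [hshift]
  have e1 : x - 1 - x = -1 := by ring
  have e2 : x + 1 - x = 1 := by ring
  rw [e1, e2]
  have hii : ∀ a b : ℝ, IntervalIntegrable (fun s => |s| / (s ^ 2 + y ^ 2)) volume a b :=
    fun a b => hcont.intervalIntegrable a b
  rw [← intervalIntegral.integral_add_adjacent_intervals (hii (-1) 0) (hii 0 1)]
  have hpos : ∫ s in (0:ℝ)..1, |s| / (s ^ 2 + y ^ 2)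
      = (1/2) * Real.log (1 + y ^ 2) - (1/2) * Real.log (y ^ 2) := by
    have : ∫ s in (0:ℝ)..1, |s| / (s ^ 2 + y ^ 2)
        = ∫ s in (0:ℝ)..1, s / (s ^ 2 + y ^ 2) := by
      apply intervalIntegral.integral_congr
      intro s hs
      rw [Set.uIcc_of_le (by norm_num : (0:ℝ) ≤ 1)] at hs
      simp only [abs_of_nonneg hs.1]
    rw [this, aux_ftc y hy]
    norm_num [add_comm]
  have hneg : ∫ s in (-1:ℝ)..0, |s| / (s ^ 2 + y ^ 2)
      = (1/2) * Real.log (1 + y ^ 2) - (1/2) * Real.log (y ^ 2) := by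
    have : ∫ s in (-1:ℝ)..0, |s| / (s ^ 2 + y ^ 2)
        = ∫ s in (-1:ℝ)..0, -(s / (s ^ 2 + y ^ 2)) := by
      apply intervalIntegral.integral_congr
      intro s hs
      rw [Set.uIcc_of_le (by norm_num : (-1:ℝ) ≤ 0)] at hs
      simp only [abs_of_nonpos hs.2, neg_div]
    rw [this, intervalIntegral.integral_neg, aux_ftc y hy]
    norm_num [add_comm]
  rw [hpos, hneg]
  ring

lemma aux_g2_int (x y : ℝ) (hy : 0 < y) :
    Integrable (fun r : ℝ => y / ((r - x) ^ 2 + y ^ 2)) := by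
  have h1 : Integrable (fun s : ℝ => (1/y) * (1 + (s/y) ^ 2)⁻¹) :=
    (integrable_inv_one_add_sq.comp_div hy.ne').const_mul (1/y)
  have h2 := h1.comp_sub_right x
  apply h2.congr
  filter_upwards with r
  show (1/y) * (1 + ((r - x)/y) ^ 2)⁻¹ = y / ((r - x) ^ 2 + y ^ 2)
  rw [div_pow, one_add_div (by positivity : y ^ 2 ≠ 0)]
  field_simp
  ring

lemma aux_g2 (x y : ℝ) (hy : 0 < y) :
    ∫ r : ℝ, y / ((r - x) ^ 2 + y ^ 2) = π := by
  have key : (fun r : ℝ => y / ((r - x) ^ 2 + y ^ 2))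
      = fun r => (fun s : ℝ => (1/y) * (1 + (s/y) ^ 2)⁻¹) (r - x) := by
    funext r
    show y / ((r - x) ^ 2 + y ^ 2) = (1/y) * (1 + ((r - x)/y) ^ 2)⁻¹
    rw [div_pow, one_add_div (by positivity : y ^ 2 ≠ 0)]
    field_simp
    ring
  rw [key, MeasureTheory.integral_sub_right_eq_self (fun s : ℝ => (1/y) * (1 + (s/y) ^ 2)⁻¹) x,
    MeasureTheory.integral_const_mul,
    MeasureTheory.Measure.integral_comp_div (fun s : ℝ => (1 + s ^ 2)⁻¹) y,
    integral_univ_inv_one_add_sq, abs_of_pos hy, smul_eq_mul]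
  field_simp

lemma aux_g3_int (x : ℝ) :
    Integrable (fun r : ℝ => 2 * (1 + (r - x) ^ 2)⁻¹) :=
  (integrable_inv_one_add_sq.comp_sub_right x).const_mul 2

lemma aux_g3 (x : ℝ) :
    ∫ r : ℝ, 2 * (1 + (r - x) ^ 2)⁻¹ = 2 * π := by
  rw [MeasureTheory.integral_const_mul,
    MeasureTheory.integral_sub_right_eq_self (fun s : ℝ => (1 + s ^ 2)⁻¹) x,
    integral_univ_inv_one_add_sq]

set_option maxHeartbeats 1000000 in
/-- If `|w(r)| ≤ C·(|r| ∧ 1)` (the case `β = 1/2`), then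
`∂_x u(x+iy) = (1/π)∫ ((r−x)²−y²)/((r−x)²+y²)²·w(r) dr` satisfies
`|∂_x u(x+iy)| ≤ C₁·log(1/y)` for `0 ≤ x ≤ y ≤ 1/2`. -/
theorem conjugate_derivative_log_bound (C : ℝ) (hC : 0 < C) (w : ℝ → ℝ)
    (hw : Measurable w) (hbound : ∀ r : ℝ, |w r| ≤ C * min |r| 1) :
    ∃ C₁ : ℝ, 0 < C₁ ∧ ∀ x y : ℝ, 0 ≤ x → x ≤ y → y ≤ 1/2 → 0 < y →
      |(1 / π) * ∫ r : ℝ, ((r - x) ^ 2 - y ^ 2) / (((r - x) ^ 2 + y ^ 2) ^ 2) * w r|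
        ≤ C₁ * Real.log (1 / y) := by
  refine ⟨20 * C, by linarith, fun x y hx hxy hy2 hy => ?_⟩
  have hπ := Real.pi_pos
  set g1 : ℝ → ℝ :=
    (Set.Icc (x-1) (x+1)).indicator (fun r => |r - x| / ((r - x) ^ 2 + y ^ 2)) with hg1def
  set g : ℝ → ℝ :=
    fun r => C * (g1 r + y / ((r - x) ^ 2 + y ^ 2) + 2 * (1 + (r - x) ^ 2)⁻¹) with hgdef
  have hg1_int : Integrable g1 := by
    apply IntegrableOn.integrable_indicator _ measurableSet_Icc
    apply ContinuousOn.integrableOn_compact isCompact_Icc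
    apply Continuous.continuousOn
    apply Continuous.div (by continuity) (by continuity)
    intro r; positivity
  have hg2_int := aux_g2_int x y hy
  have hg3_int := aux_g3_int x
  have hg_int : Integrable g := ((hg1_int.add hg2_int).add hg3_int).const_mul C
  -- pointwise bound
  have hpt : ∀ r : ℝ, ‖((r - x) ^ 2 - y ^ 2) / (((r - x) ^ 2 + y ^ 2) ^ 2) * w r‖ ≤ g r := by
    intro r
    have hD : (0:ℝ) < (r - x) ^ 2 + y ^ 2 := by positivity
    rw [Real.norm_eq_abs, abs_mul]
    have hmin0 : (0:ℝ) ≤ min |r| 1 := le_min (abs_nonneg r) zero_le_one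
    have key : |((r - x) ^ 2 - y ^ 2) / (((r - x) ^ 2 + y ^ 2) ^ 2)| * |w r|
        ≤ (((r - x) ^ 2 + y ^ 2)⁻¹) * (C * min |r| 1) := by
      apply mul_le_mul _ (hbound r) (abs_nonneg _) (by positivity)
      rw [abs_div, abs_of_pos (by positivity : (0:ℝ) < ((r - x) ^ 2 + y ^ 2) ^ 2)]
      have habs : |(r - x) ^ 2 - y ^ 2| ≤ (r - x) ^ 2 + y ^ 2 :=
        abs_le.mpr ⟨by nlinarith, by nlinarith⟩
      calc |(r - x) ^ 2 - y ^ 2| / ((r - x) ^ 2 + y ^ 2) ^ 2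
          ≤ ((r - x) ^ 2 + y ^ 2) / ((r - x) ^ 2 + y ^ 2) ^ 2 := by gcongr
        _ = ((r - x) ^ 2 + y ^ 2)⁻¹ := by
            rw [sq ((r - x) ^ 2 + y ^ 2), div_mul_cancel_left₀ hD.ne']
    refine key.trans ?_
    by_cases hr : r ∈ Set.Icc (x-1) (x+1)
    · have hg1r : g1 r = |r - x| / ((r - x) ^ 2 + y ^ 2) := by
        rw [hg1def, Set.indicator_of_mem hr]
      have hmin2 : min |r| 1 ≤ |r - x| + y := by
        have h1 : |r| ≤ |r - x| + |x| := by
          calc |r| = |(r - x) + x| := by ring_nf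
            _ ≤ |r - x| + |x| := abs_add_le _ _
        have h2 : |x| = x := abs_of_nonneg hx
        calc min |r| 1 ≤ |r| := min_le_left _ _
          _ ≤ |r - x| + y := by rw [h2] at h1; linarith
      have h3 : (0:ℝ) ≤ 2 * (1 + (r - x) ^ 2)⁻¹ := by positivity
      have step1 : (((r - x) ^ 2 + y ^ 2)⁻¹) * (C * min |r| 1)
          ≤ (((r - x) ^ 2 + y ^ 2)⁻¹) * (C * (|r - x| + y)) := by
        gcongr
      have step2 : (((r - x) ^ 2 + y ^ 2)⁻¹) * (C * (|r - x| + y))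
          = C * (|r - x| / ((r - x) ^ 2 + y ^ 2) + y / ((r - x) ^ 2 + y ^ 2)) := by
        field_simp
      show _ ≤ C * (g1 r + y / ((r - x) ^ 2 + y ^ 2) + 2 * (1 + (r - x) ^ 2)⁻¹)
      rw [hg1r]
      nlinarith [mul_nonneg hC.le h3]
    · have hg1r : g1 r = 0 := by rw [hg1def, Set.indicator_of_notMem hr]
      have hs : 1 ≤ (r - x) ^ 2 := by
        rw [Set.mem_Icc, not_and_or] at hr
        push_neg at hr
        rcases hr with h | h
        · nlinarith
        · nlinarith
      have hle : (1 + (r - x) ^ 2) / 2 ≤ (r - x) ^ 2 + y ^ 2 := by nlinarith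
      have h2 : (((r - x) ^ 2 + y ^ 2)⁻¹) ≤ 2 * (1 + (r - x) ^ 2)⁻¹ := by
        have := inv_anti₀ (by positivity : (0:ℝ) < (1 + (r - x) ^ 2) / 2) hle
        rw [inv_div] at this
        rw [div_eq_mul_inv] at this
        exact this
      have hm1 : min |r| 1 ≤ 1 := min_le_right _ _
      have hg2nn : (0:ℝ) ≤ y / ((r - x) ^ 2 + y ^ 2) := by positivity
      show _ ≤ C * (g1 r + y / ((r - x) ^ 2 + y ^ 2) + 2 * (1 + (r - x) ^ 2)⁻¹)
      rw [hg1r]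
      have e1 : (((r - x) ^ 2 + y ^ 2)⁻¹) * (C * min |r| 1) ≤ (((r - x) ^ 2 + y ^ 2)⁻¹) * C := by
        have : C * min |r| 1 ≤ C * 1 := by gcongr
        nlinarith [inv_pos.mpr hD]
      have e2 : (((r - x) ^ 2 + y ^ 2)⁻¹) * C ≤ (2 * (1 + (r - x) ^ 2)⁻¹) * C := by
        gcongr
      nlinarith [mul_nonneg hC.le hg2nn]
  -- integral bound
  have hle : ‖∫ r : ℝ, ((r - x) ^ 2 - y ^ 2) / (((r - x) ^ 2 + y ^ 2) ^ 2) * w r‖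
      ≤ ∫ r : ℝ, g r :=
    MeasureTheory.norm_integral_le_of_norm_le hg_int (Filter.Eventually.of_forall hpt)
  have hI : ∫ r : ℝ, g r
      = C * ((Real.log (1 + y ^ 2) - Real.log (y ^ 2)) + π + 2 * π) := by
    rw [hgdef]
    rw [MeasureTheory.integral_const_mul]
    have hadd12 : Integrable (fun a : ℝ => g1 a + y / ((a - x) ^ 2 + y ^ 2)) volume :=
      hg1_int.add hg2_int
    rw [MeasureTheory.integral_add hadd12 hg3_int,
      MeasureTheory.integral_add hg1_int hg2_int]
    rw [hg1def, aux_g1 x y hy, aux_g2 x y hy, aux_g3 x]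
  -- numeric conclusion
  set L := Real.log (1 / y) with hLdef
  have h2y : (2:ℝ) ≤ 1 / y := by
    rw [le_div_iff₀ hy]; linarith
  have hL2 : Real.log 2 ≤ L := Real.log_le_log two_pos h2y
  have hlog2 : (0.6931471803:ℝ) < Real.log 2 := Real.log_two_gt_d9
  have hLpos : 0 < L := lt_of_lt_of_le (by linarith) hL2
  have hlogy2 : Real.log (y ^ 2) = -(2 * L) := by
    rw [hLdef, one_div, Real.log_inv, Real.log_pow]
    push_cast
    ring
  have hA : Real.log (1 + y ^ 2) ≤ L := by
    have h1 : Real.log (1 + y ^ 2) ≤ Real.log 2 :=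
      Real.log_le_log (by positivity) (by nlinarith)
    linarith
  rw [abs_mul, abs_of_pos (by positivity : (0:ℝ) < 1 / π)]
  have hfin : |∫ r : ℝ, ((r - x) ^ 2 - y ^ 2) / (((r - x) ^ 2 + y ^ 2) ^ 2) * w r|
      ≤ C * ((Real.log (1 + y ^ 2) - Real.log (y ^ 2)) + π + 2 * π) := by
    rw [← hI]; exact hle
  have hpi3 : (3:ℝ) < π := Real.pi_gt_three
  have hpi315 : π < 3.15 := Real.pi_lt_d2
  calc 1 / π * |∫ r : ℝ, ((r - x) ^ 2 - y ^ 2) / (((r - x) ^ 2 + y ^ 2) ^ 2) * w r|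
      ≤ 1 / π * (C * ((Real.log (1 + y ^ 2) - Real.log (y ^ 2)) + π + 2 * π)) := by
        gcongr
    _ ≤ 20 * C * L := by
        rw [hlogy2, one_div, inv_mul_le_iff₀ hπ]
        nlinarith [mul_le_mul_of_nonneg_left hA hC.le,
          mul_le_mul_of_nonneg_left hL2 hC.le,
          mul_nonneg (mul_nonneg hC.le hLpos.le) (by linarith : (0:ℝ) ≤ π - 3),
          mul_pos hC hLpos]
end
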